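/- arXiv:2603.21771 — 3 statements merged into one kernel-verified Lean document; each statement's English description precedes it below -/
import Mathlib

section
/- Let E, A ∈ ℂ^{n×n} with E positive semidefinite and λE − A regular of index at least two with no Kronecker blocks of size one at infinity, and suppose A = J − R with J skew-Hermitian (J* = −J) and R Hermitian positive semidefinite. Then in the unitary block decomposition U*EU = diag(E₁₁,0), U*AU = [[A₁₁,A₁₂],[A₂₁,0]], the blocks of R satisfy R₁₂ = 0, R₂₁ = 0 and R₂₂ = 0, and consequently A₁₂ = J₁₂ and A₂₁ = −J₁₂*. -/
open Matrix
open scoped ComplexOrder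

/-- For a regular pencil λE − A of index ≥ 2 with no Kronecker blocks of size one at
infinity (equivalently A(ker E) ⊆ ran E, with E singular), where E is PSD and
A = J − R with J skew-Hermitian and R PSD: in the unitary block decomposition
U*EU = diag(E₁₁,0), U*AU = [[A₁₁,A₁₂],[A₂₁,0]], the blocks of R satisfy
R₁₂ = 0, R₂₁ = 0, R₂₂ = 0, and consequently A₁₂ = J₁₂ and A₂₁ = −J₁₂ᴴ. -/
theorem stmt1 {n₁ n₂ : ℕ} (hn₂ : 0 < n₂)
    (E A J R : Matrix (Fin n₁ ⊕ Fin n₂) (Fin n₁ ⊕ Fin n₂) ℂ)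
    (hE : E.PosSemidef)
    (hreg : ∃ z : ℂ, (z • E - A).det ≠ 0)
    (hnoblock1 : ∀ x : Fin n₁ ⊕ Fin n₂ → ℂ, E.mulVec x = 0 → ∃ y, E.mulVec y = A.mulVec x)
    (hA : A = J - R) (hJ : Jᴴ = -J) (hR : R.PosSemidef)
    (U : Matrix (Fin n₁ ⊕ Fin n₂) (Fin n₁ ⊕ Fin n₂) ℂ)
    (hU : U ∈ Matrix.unitaryGroup (Fin n₁ ⊕ Fin n₂) ℂ)
    (E₁₁ A₁₁ J₁₁ R₁₁ : Matrix (Fin n₁) (Fin n₁) ℂ)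
    (A₁₂ J₁₂ R₁₂ : Matrix (Fin n₁) (Fin n₂) ℂ)
    (A₂₁ J₂₁ R₂₁ : Matrix (Fin n₂) (Fin n₁) ℂ)
    (J₂₂ R₂₂ : Matrix (Fin n₂) (Fin n₂) ℂ)
    (hEU : Uᴴ * E * U = Matrix.fromBlocks E₁₁ 0 0 0)
    (hE11 : IsUnit E₁₁.det)
    (hAU : Uᴴ * A * U = Matrix.fromBlocks A₁₁ A₁₂ A₂₁ 0)
    (hJU : Uᴴ * J * U = Matrix.fromBlocks J₁₁ J₁₂ J₂₁ J₂₂)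
    (hRU : Uᴴ * R * U = Matrix.fromBlocks R₁₁ R₁₂ R₂₁ R₂₂) :
    R₁₂ = 0 ∧ R₂₁ = 0 ∧ R₂₂ = 0 ∧ A₁₂ = J₁₂ ∧ A₂₁ = -J₁₂ᴴ := by
  -- block equalities from A = J - R
  have hblocks : Matrix.fromBlocks A₁₁ A₁₂ A₂₁ 0 =
      Matrix.fromBlocks (J₁₁ - R₁₁) (J₁₂ - R₁₂) (J₂₁ - R₂₁) (J₂₂ - R₂₂) := by
    rw [← hAU, hA, Matrix.mul_sub, Matrix.sub_mul, hJU, hRU]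
    ext i j
    rcases i with i | i <;> rcases j with j | j <;>
      simp [Matrix.fromBlocks_apply₁₁, Matrix.fromBlocks_apply₁₂,
        Matrix.fromBlocks_apply₂₁, Matrix.fromBlocks_apply₂₂]
  rw [Matrix.fromBlocks_inj] at hblocks
  obtain ⟨h11, h12, h21, h22⟩ := hblocks
  -- PSD of UᴴRU
  have hM : (Uᴴ * R * U).PosSemidef := hR.conjTranspose_mul_mul_same U
  rw [hRU] at hM
  -- Hermitian of the block matrix
  have hherm := hM.isHermitian
  rw [Matrix.IsHermitian, Matrix.fromBlocks_conjTranspose, Matrix.fromBlocks_inj] at hherm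
  obtain ⟨hh11, hh12, hh21, hh22⟩ := hherm
  -- skew-Hermitian of UᴴJU
  have hJskew : (Uᴴ * J * U)ᴴ = -(Uᴴ * J * U) := by
    simp [Matrix.conjTranspose_mul, hJ, Matrix.mul_assoc, Matrix.neg_mul, Matrix.mul_neg]
  rw [hJU, Matrix.fromBlocks_conjTranspose, Matrix.fromBlocks_neg,
    Matrix.fromBlocks_inj] at hJskew
  obtain ⟨hs11, hs12, hs21, hs22⟩ := hJskew
  -- R₂₂ = J₂₂ and hermitian + skew forces 0
  have hRJ22 : R₂₂ = J₂₂ := (sub_eq_zero.mp h22.symm).symm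
  have hR22 : R₂₂ = 0 := by
    have h1 : R₂₂ᴴ = R₂₂ := hh22
    have h2 : J₂₂ᴴ = -J₂₂ := hs22
    have hneg : R₂₂ = -R₂₂ := by
      calc R₂₂ = R₂₂ᴴ := h1.symm
        _ = J₂₂ᴴ := by rw [hRJ22]
        _ = -J₂₂ := h2
        _ = -R₂₂ := by rw [hRJ22]
    have h3 : (2 : ℂ) • R₂₂ = 0 := by
      rw [two_smul]; nth_rewrite 2 [hneg]; simp
    have := smul_eq_zero.mp h3
    simpa using this
  -- use PSD with zero (2,2) block to kill off-diagonals
  have hR12 : R₁₂ = 0 := by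
    ext i j
    classical
    set x : Fin n₁ ⊕ Fin n₂ → ℂ := Sum.elim 0 (Pi.single j 1) with hx
    have hdot : star x ⬝ᵥ (Matrix.fromBlocks R₁₁ R₁₂ R₂₁ R₂₂) *ᵥ x = 0 := by
      have : (Matrix.fromBlocks R₁₁ R₁₂ R₂₁ R₂₂) *ᵥ x =
          Sum.elim (fun i => R₁₂ i j) (fun k => R₂₂ k j) := by
        funext k
        cases k with
        | inl i =>
          simp [hx, Matrix.mulVec, dotProduct, Fintype.sum_sum_type,
            Matrix.fromBlocks_apply₁₁, Matrix.fromBlocks_apply₁₂, Pi.single_apply]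
        | inr k =>
          simp [hx, Matrix.mulVec, dotProduct, Fintype.sum_sum_type,
            Matrix.fromBlocks_apply₂₁, Matrix.fromBlocks_apply₂₂, Pi.single_apply]
      rw [this]
      simp [hx, dotProduct, Fintype.sum_sum_type, Pi.single_apply, hR22]
    have hmv := (hM.dotProduct_mulVec_zero_iff x).mp hdot
    have := congrFun hmv (Sum.inl i)
    simpa [hx, Matrix.mulVec, dotProduct, Fintype.sum_sum_type,
      Matrix.fromBlocks_apply₁₁, Matrix.fromBlocks_apply₁₂, Pi.single_apply] using this
  have hR21 : R₂₁ = 0 := by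
    rw [← hh21, hR12]; simp
  refine ⟨hR12, hR21, hR22, ?_, ?_⟩
  · rw [h12, hR12, sub_zero]
  · rw [h21, hR21, sub_zero, hs21, neg_neg]
end

section
/- Let E ∈ ℂ^{n×n} be Hermitian positive semidefinite, J ∈ ℂ^{n×n} skew-Hermitian (J* = −J), and τ > 0. Then the matrix (E + τI)⁻¹J is diagonalizable and its eigenvector condition number satisfies κ_V((E + τI)⁻¹J) ≤ κ(E + τI) ≤ (‖E‖ + τ)/τ, where κ(T) = ‖T‖·‖T⁻¹‖. -/
open Matrix

noncomputable def opN {m : Type*} [Fintype m] [DecidableEq m] (M : Matrix m m ℂ) : ℝ :=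
  ‖(Matrix.toEuclideanCLM (𝕜 := ℂ) M : EuclideanSpace ℂ m →L[ℂ] EuclideanSpace ℂ m)‖

noncomputable def smin {m : Type*} [Fintype m] [DecidableEq m] (M : Matrix m m ℂ) : ℝ :=
  sInf ((fun x : EuclideanSpace ℂ m => ‖Matrix.toEuclideanCLM (𝕜 := ℂ) M x‖) '' {x : EuclideanSpace ℂ m | ‖x‖ = 1})

noncomputable def kappaV {m : Type*} [Fintype m] [DecidableEq m] (X : Matrix m m ℂ) : ℝ :=
  sInf { c : ℝ | ∃ T : Matrix m m ℂ, IsUnit T.det ∧ (T⁻¹ * X * T).IsDiag ∧ c = opN T * opN T⁻¹ }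

open scoped ComplexOrder

/-!
Put `A = E + τI` and `S = A^{1/2}`. Then `S (A⁻¹J) S⁻¹ = S⁻¹JS⁻¹` is skew-Hermitian, so a unitary
`U` diagonalizes it and `T = S⁻¹U` diagonalizes `A⁻¹J`. Unitary invariance of the operator norm
gives `κ(T) = κ(S)`, and the C⋆-identity `‖S‖² = ‖S²‖` gives `κ(S)² = κ(A)`; as `κ(S) ≥ 1`,
`κ(T) ≤ κ(A)`. Finally `‖A‖ ≤ ‖E‖ + τ`, and `τ ≤ A` in the Loewner order yields `A⁻¹ ≤ τ⁻¹` by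
operator monotonicity of inversion, hence `‖A⁻¹‖ ≤ τ⁻¹`.
-/

open Ring

lemma norm_mul_norm_ringInverse_le_sq {R : Type*} [NormedRing R] (x : R) :
    ‖x‖ * ‖x⁻¹ʳ‖ ≤ (‖x‖ * ‖x⁻¹ʳ‖) ^ 2 := by
  rcases subsingleton_or_nontrivial R with _ | _
  · simp [Subsingleton.elim x 0]
  by_cases hx : IsUnit x
  · refine le_self_pow₀ ?_ two_ne_zero
    calc 1 ≤ ‖(1 : R)‖ := one_le_norm_one R
      _ = ‖x * x⁻¹ʳ‖ := by rw [mul_inverse_cancel x hx]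
      _ ≤ ‖x‖ * ‖x⁻¹ʳ‖ := norm_mul_le _ _
  · simp [inverse_non_unit x hx]

lemma ringInverse_algebraMap {𝕜 A : Type*} [Field 𝕜] [Semiring A] [Algebra 𝕜 A] {c : 𝕜}
    (hc : c ≠ 0) : (algebraMap 𝕜 A c)⁻¹ʳ = algebraMap 𝕜 A c⁻¹ := by
  rw [← mul_one (algebraMap 𝕜 A c)⁻¹ʳ,
    inverse_mul_eq_iff_eq_mul _ _ _ ((isUnit_iff_ne_zero.2 hc).map _), ← map_mul,
    mul_inv_cancel₀ hc, map_one]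

lemma CStarRing.norm_algebraMap_le {A : Type*} [NormedRing A] [StarRing A] [CStarRing A]
    [NormedAlgebra ℝ A] {τ : ℝ} (hτ : 0 ≤ τ) : ‖algebraMap ℝ A τ‖ ≤ τ := by
  rcases subsingleton_or_nontrivial A with _ | _
  · simpa [Subsingleton.elim (algebraMap ℝ A τ) 0] using hτ
  · rw [norm_algebraMap', Real.norm_of_nonneg hτ]

namespace CStarAlgebra

variable {A : Type*} [CStarAlgebra A] [PartialOrder A] [StarOrderedRing A]

lemma norm_ringInverse_le_of_algebraMap_le {a : A} {τ : ℝ} (hτ : 0 < τ)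
    (ha : algebraMap ℝ A τ ≤ a) : ‖a⁻¹ʳ‖ ≤ τ⁻¹ := by
  have hτA : IsStrictlyPositive (algebraMap ℝ A τ) := isStrictlyPositive_algebraMap hτ
  have hinv : a⁻¹ʳ ≤ algebraMap ℝ A τ⁻¹ := by
    rw [← ringInverse_algebraMap hτ.ne']
    exact ringInverse_le_ringInverse ha hτA
  exact (norm_le_iff_le_algebraMap _ (inv_nonneg.2 hτ.le)
    (hτA.of_le ha).ringInverse.nonneg).2 hinv

lemma norm_mul_norm_ringInverse_add_algebraMap_le {a : A} (ha : 0 ≤ a) {τ : ℝ} (hτ : 0 < τ) :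
    ‖a + algebraMap ℝ A τ‖ * ‖(a + algebraMap ℝ A τ)⁻¹ʳ‖ ≤ (‖a‖ + τ) / τ := by
  rw [div_eq_mul_inv]
  gcongr
  · calc ‖a + algebraMap ℝ A τ‖ ≤ ‖a‖ + ‖algebraMap ℝ A τ‖ := norm_add_le _ _
      _ ≤ ‖a‖ + τ := by gcongr; exact CStarRing.norm_algebraMap_le hτ.le
  · exact norm_ringInverse_le_of_algebraMap_le hτ (le_add_of_nonneg_left ha)

lemma norm_mul_norm_ringInverse_sqrt_le {a : A} (ha : 0 ≤ a) :
    ‖CFC.sqrt a‖ * ‖(CFC.sqrt a)⁻¹ʳ‖ ≤ ‖a‖ * ‖a⁻¹ʳ‖ := by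
  set s := CFC.sqrt a
  have hs : IsSelfAdjoint s := (CFC.sqrt_nonneg a).isSelfAdjoint
  calc ‖s‖ * ‖s⁻¹ʳ‖ ≤ (‖s‖ * ‖s⁻¹ʳ‖) ^ 2 := norm_mul_norm_ringInverse_le_sq s
    _ = ‖s * s‖ * ‖s⁻¹ʳ * s⁻¹ʳ‖ := by
      rw [hs.norm_mul_self, hs.ringInverse.norm_mul_self]; ring
    _ = ‖a‖ * ‖a⁻¹ʳ‖ := by rw [← mul_inverse_rev' (Commute.refl s), CFC.sqrt_mul_sqrt_self a ha]

end CStarAlgebra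

open scoped Matrix.Norms.L2Operator MatrixOrder

namespace Matrix

variable {n : Type*} [Fintype n] [DecidableEq n]

lemma exists_mem_unitaryGroup_isDiag_conj_of_conjTranspose_eq_neg {M : Matrix n n ℂ}
    (hM : Mᴴ = -M) : ∃ U ∈ unitaryGroup n ℂ, (star U * M * U).IsDiag := by
  have hH : (Complex.I • M).IsHermitian := by
    rw [IsHermitian, conjTranspose_smul, hM]
    simp
  set U : Matrix n n ℂ := ↑hH.eigenvectorUnitary
  have hdiag := hH.conjStarAlgAut_star_eigenvectorUnitary
  rw [Unitary.conjStarAlgAut_star_apply] at hdiag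
  refine ⟨U, hH.eigenvectorUnitary.2, ?_⟩
  have hM_eq : star U * M * U = (-Complex.I) • (star U * (Complex.I • M) * U) := by
    simp [smul_smul]
  rw [hM_eq, hdiag]
  exact (isDiag_diagonal _).smul _

lemma exists_isDiag_conj_inv_mul_of_posDef {A J : Matrix n n ℂ} (hA : A.PosDef)
    (hJ : Jᴴ = -J) :
    ∃ T : Matrix n n ℂ, IsUnit T.det ∧ (T⁻¹ * (A⁻¹ * J) * T).IsDiag ∧
      ‖T‖ * ‖T⁻¹‖ ≤ ‖A‖ * ‖A⁻¹‖ := by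
  set S := CFC.sqrt A
  have hS : Sᴴ = S := (CFC.sqrt_nonneg A).isSelfAdjoint
  have hSS : S * S = A := CFC.sqrt_mul_sqrt_self A hA.posSemidef.nonneg
  have hSdet : IsUnit S.det := by
    have : IsUnit (S.det * S.det) := by
      rw [← det_mul, hSS]
      exact (isUnit_iff_isUnit_det A).1 hA.isUnit
    exact isUnit_of_mul_isUnit_left this
  obtain ⟨U, hU, hdiag⟩ :=
    exists_mem_unitaryGroup_isDiag_conj_of_conjTranspose_eq_neg (M := S⁻¹ * J * S⁻¹) (by
      rw [conjTranspose_mul, conjTranspose_mul, conjTranspose_nonsing_inv, hS, hJ]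
      simp [Matrix.mul_assoc])
  have hleft : star U * S * (S⁻¹ * U) = 1 := by
    rw [Matrix.mul_assoc, mul_nonsing_inv_cancel_left _ _ hSdet, (mem_unitaryGroup_iff').1 hU]
  refine ⟨S⁻¹ * U, isUnit_det_of_left_inverse hleft, ?_, ?_⟩
  · rw [inv_eq_left_inv hleft, ← hSS, Matrix.mul_inv_rev]
    convert hdiag using 1
    simp [Matrix.mul_assoc, mul_nonsing_inv_cancel_left _ _ hSdet]
  · rw [inv_eq_left_inv hleft, CStarRing.norm_mul_coe_unitary S⁻¹ ⟨U, hU⟩,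
      CStarRing.norm_coe_unitary_mul ⟨star U, Unitary.star_mem hU⟩ S, mul_comm,
      nonsing_inv_eq_ringInverse, nonsing_inv_eq_ringInverse]
    exact CStarAlgebra.norm_mul_norm_ringInverse_sqrt_le hA.posSemidef.nonneg

end Matrix

lemma kappaV_le {m : Type*} [Fintype m] [DecidableEq m] {X T : Matrix m m ℂ}
    (hT : IsUnit T.det) (hX : (T⁻¹ * X * T).IsDiag) : kappaV X ≤ opN T * opN T⁻¹ :=
  csInf_le ⟨0, by rintro _ ⟨T, -, -, rfl⟩; exact mul_nonneg (norm_nonneg _) (norm_nonneg _)⟩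
    ⟨T, hT, hX, rfl⟩

/-- For E PSD, J skew-Hermitian and τ > 0, the matrix (E+τI)⁻¹J is diagonalizable
and κ_V((E+τI)⁻¹J) ≤ κ(E+τI) ≤ (‖E‖+τ)/τ. -/
theorem stmt7 {n : ℕ} (E J : Matrix (Fin n) (Fin n) ℂ)
    (hE : E.PosSemidef) (hJ : Jᴴ = -J) (τ : ℝ) (hτ : 0 < τ) :
    (∃ T : Matrix (Fin n) (Fin n) ℂ, IsUnit T.det ∧
      (T⁻¹ * ((E + (τ : ℂ) • 1)⁻¹ * J) * T).IsDiag) ∧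
    kappaV ((E + (τ : ℂ) • 1)⁻¹ * J) ≤
      opN (E + (τ : ℂ) • 1) * opN (E + (τ : ℂ) • 1)⁻¹ ∧
    opN (E + (τ : ℂ) • 1) * opN (E + (τ : ℂ) • 1)⁻¹ ≤ (opN E + τ) / τ := by
  have hτ1 : (τ : ℂ) • (1 : Matrix (Fin n) (Fin n) ℂ) = algebraMap ℝ _ τ := by
    rw [Algebra.algebraMap_eq_smul_one, Complex.coe_smul]
  have hA : (E + (τ : ℂ) • 1).PosDef := by
    rw [hτ1, ← isStrictlyPositive_iff_posDef]
    exact isStrictlyPositive_add (Or.inr ⟨hE.nonneg, isStrictlyPositive_algebraMap hτ⟩)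
  obtain ⟨T, hT, hdiag, hκ⟩ := exists_isDiag_conj_inv_mul_of_posDef hA hJ
  refine ⟨⟨T, hT, hdiag⟩, (kappaV_le hT hdiag).trans hκ, ?_⟩
  rw [hτ1, nonsing_inv_eq_ringInverse]
  exact CStarAlgebra.norm_mul_norm_ringInverse_add_algebraMap_le hE.nonneg hτ
end

section
/- Let E, J, R, Q ∈ ℂ^{n×n} with Q Hermitian positive definite, J* = −J, R Hermitian positive semidefinite, and Q*E ≥ 0 (i.e., QE Hermitian positive semidefinite). Set T := Q^{−1/2}. Then T⁻¹(λE − (J−R)Q)T = λE' − (J' − R'), where E' := Q^{1/2}EQ^{−1/2} is similar to E, J' := Q^{1/2}JQ^{1/2} is skew-Hermitian, R' := Q^{1/2}RQ^{1/2} is Hermitian positive semidefinite, and E' is Hermitian positive semidefinite. -/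
open Matrix
open scoped ComplexOrder

/-- Every dissipative Hamiltonian pencil λE − (J−R)Q with Q > 0 is similar via
T = Q^{−1/2} to one with Q = I: writing S = Q^{1/2} (so S·S = Q), we have
S(λE − (J−R)Q)S⁻¹ = λE' − (J' − R') with E' = SES⁻¹ similar to E and PSD,
J' = SJS skew-Hermitian, and R' = SRS PSD. -/
theorem stmt11 {n : ℕ} (E J R Q S : Matrix (Fin n) (Fin n) ℂ)
    (hQ : Q.PosDef) (hJ : Jᴴ = -J) (hR : R.PosSemidef)
    (hQE : (Q * E).PosSemidef)
    (hS : S.PosDef) (hSS : S * S = Q) :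
    (∀ z : ℂ, S * (z • E - (J - R) * Q) * S⁻¹ =
      z • (S * E * S⁻¹) - ((S * J * S) - (S * R * S))) ∧
    (S * J * S)ᴴ = -(S * J * S) ∧
    (S * R * S).PosSemidef ∧
    (S * E * S⁻¹).PosSemidef ∧
    (∃ P : Matrix (Fin n) (Fin n) ℂ, IsUnit P.det ∧ S * E * S⁻¹ = P⁻¹ * E * P) := by
  have hSH : Sᴴ = S := hS.isHermitian
  have hSu : IsUnit S.det := isUnit_iff_ne_zero.mpr hS.det_pos.ne'
  have hSinv : S * S⁻¹ = 1 := mul_nonsing_inv S hSu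
  have hSinv' : S⁻¹ * S = 1 := nonsing_inv_mul S hSu
  have hinvH : (S⁻¹)ᴴ = S⁻¹ := by rw [conjTranspose_nonsing_inv, hSH]
  refine ⟨?_, ?_, ?_, ?_, ?_⟩
  · intro z
    have : S * ((J - R) * Q) * S⁻¹ = S * J * S - S * R * S := by
      rw [← hSS]
      have : S * ((J - R) * (S * S)) * S⁻¹
          = (S * J * S - S * R * S) * (S * S⁻¹) := by noncomm_ring
      rw [this, hSinv, mul_one]
    rw [Matrix.mul_sub, Matrix.sub_mul, mul_smul_comm, smul_mul_assoc, this]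
  · rw [conjTranspose_mul, conjTranspose_mul, hSH, hJ]
    noncomm_ring
  · have := hR.mul_mul_conjTranspose_same S
    rwa [hSH] at this
  · have h1 : S * E * S⁻¹ = S⁻¹ * (Q * E) * S⁻¹ := by
      rw [← hSS]
      have : S⁻¹ * (S * S * E) * S⁻¹ = (S⁻¹ * S) * (S * E * S⁻¹) := by noncomm_ring
      rw [this, hSinv', one_mul]
    rw [h1]
    have := hQE.mul_mul_conjTranspose_same S⁻¹
    rwa [hinvH] at this
  · exact ⟨S⁻¹, isUnit_nonsing_inv_det S hSu, by rw [nonsing_inv_nonsing_inv S hSu]⟩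
end
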